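/- There exist infinitely many pairwise distinct clones (composition-closed classes containing the projections) of finitary operations on M, each of which is proper (excludes some operation): namely, the classes K₁, K₂, … of operations preserving ¬Δ¹0, ¬Δ²0, … respectively, are pairwise distinct, each contains all projections and is closed under composition, and each excludes the unary operation Δ. -/

import Mathlib

/-!
Each `Kᵢ` is the set of operations fixing the single element `¬Δⁱ0` on the diagonal; such a
set is always a clone, and it determines the element it fixes, because the constant unary
operation with that value lies in it. Since `Δⁱ0` is the indicator of `{n | n < i}`, these
elements are pairwise distinct, and none of them (for `i ≥ 1`) is fixed by `Δ`, whose value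
at `0` is always `true`.
-/

/-- The algebra of infinite binary sequences. -/
abbrev M := ℕ → Bool

/-- Pointwise boolean operations. -/
def mAnd (a b : M) : M := fun n => a n && b n
def mOr (a b : M) : M := fun n => a n || b n
def mImp (a b : M) : M := fun n => !a n || b n
def mNeg (a : M) : M := fun n => !a n
def mIff (a b : M) : M := fun n => a n == b n
def mZero : M := fun _ => false
def mOne : M := fun _ => true

/-- The operator Δ: (Δα)(0)=1 and (Δα)(n+1)=α(0)∧⋯∧α(n). -/
def Delta (a : M) : M := fun n => decide (∀ k, k < n → a k = true)

def box (a : M) : M := mAnd a (Delta a)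
def nabla (a : M) : M := box (mNeg (box (mNeg (box a))))

/-- The class K_i of finitary operations on M preserving ¬Δⁱ0. -/
def Kclass (i : ℕ) : Set (Σ n : ℕ, (Fin n → M) → M) :=
  {F | F.2 (fun _ => mNeg (Delta^[i] mZero)) = mNeg (Delta^[i] mZero)}

section preserving

variable {α : Type*}

def preserving (c : α) : Set (Σ n : ℕ, (Fin n → α) → α) :=
  {F | F.2 (fun _ => c) = c}

theorem proj_mem_preserving (c : α) (n : ℕ) (k : Fin n) :
    (⟨n, fun x => x k⟩ : Σ n, (Fin n → α) → α) ∈ preserving c :=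
  rfl

theorem comp_mem_preserving {c : α} {n m : ℕ} {F : (Fin n → α) → α}
    {G : Fin n → (Fin m → α) → α} (hF : (⟨n, F⟩ : Σ n, (Fin n → α) → α) ∈ preserving c)
    (hG : ∀ k, (⟨m, G k⟩ : Σ n, (Fin n → α) → α) ∈ preserving c) :
    (⟨m, fun x => F (fun k => G k x)⟩ : Σ n, (Fin n → α) → α) ∈ preserving c := by
  change F (fun k => G k fun _ => c) = c
  simp only [show ∀ k, G k (fun _ => c) = c from hG]
  exact hF

theorem preserving_injective : Function.Injective (preserving (α := α)) :=
  fun c d hcd => (hcd ▸ rfl : (⟨1, fun _ => c⟩ : Σ n, (Fin n → α) → α) ∈ preserving d)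

end preserving

theorem kclass_eq_preserving (i : ℕ) : Kclass i = preserving (mNeg (Delta^[i] mZero)) :=
  rfl

theorem delta_apply_zero (a : M) : Delta a 0 = true := by
  simp [Delta]

theorem delta_iterate_mZero (i : ℕ) : Delta^[i] mZero = fun n => decide (n < i) := by
  induction i with
  | zero => funext n; simp [mZero]
  | succ i ih =>
    rw [Function.iterate_succ_apply', ih]
    funext n
    simp only [Delta, decide_eq_true_eq, decide_eq_decide]
    refine ⟨fun h => ?_, fun h k hk => by omega⟩
    by_contra hn
    exact lt_irrefl i (h i (by omega))

theorem delta_iterate_mZero_injective : Function.Injective fun i => Delta^[i] mZero := by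
  intro i j hij
  simp only [delta_iterate_mZero] at hij
  have hi := congrFun hij i
  have hj := congrFun hij j
  simp only [decide_eq_decide] at hi hj
  omega

theorem mNeg_injective : Function.Injective mNeg :=
  fun _ _ h => funext fun n => Bool.not_inj (congrFun h n)

theorem delta_not_mem_kclass {i : ℕ} (hi : 1 ≤ i) :
    (⟨1, fun x => Delta (x 0)⟩ : Σ n, (Fin n → M) → M) ∉ Kclass i := by
  intro h
  have h0 : Delta (mNeg (Delta^[i] mZero)) 0 = mNeg (Delta^[i] mZero) 0 := congrFun h 0
  rw [delta_apply_zero, delta_iterate_mZero] at h0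
  simp [mNeg, Nat.lt_of_lt_of_le Nat.zero_lt_one hi] at h0

/-- The classes K₁, K₂, … are pairwise distinct proper clones:
each contains all projections, is closed under composition, and
excludes the unary operation Δ. -/
theorem stmt19 :
    (∀ i : ℕ, 1 ≤ i →
      (∀ (n : ℕ) (k : Fin n), (⟨n, fun x => x k⟩ : Σ n, (Fin n → M) → M) ∈ Kclass i) ∧
      (∀ (n m : ℕ) (F : (Fin n → M) → M) (G : Fin n → ((Fin m → M) → M)),
        (⟨n, F⟩ : Σ n, (Fin n → M) → M) ∈ Kclass i →
        (∀ k, (⟨m, G k⟩ : Σ n, (Fin n → M) → M) ∈ Kclass i) →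
        (⟨m, fun x => F (fun k => G k x)⟩ : Σ n, (Fin n → M) → M) ∈ Kclass i) ∧
      (⟨1, fun x => Delta (x 0)⟩ : Σ n, (Fin n → M) → M) ∉ Kclass i) ∧
    (∀ i j : ℕ, 1 ≤ i → 1 ≤ j → i ≠ j → Kclass i ≠ Kclass j) := by
  refine ⟨fun i hi => ⟨fun n k => proj_mem_preserving _ n k,
    fun n m F G hF hG => comp_mem_preserving hF hG, delta_not_mem_kclass hi⟩, ?_⟩
  intro i j _ _ hij hK
  rw [kclass_eq_preserving, kclass_eq_preserving] at hK
  exact hij (delta_iterate_mZero_injective (mNeg_injective (preserving_injective hK)))
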